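/- The set {x ∈ ℂ^d : t(x x†) = tr(x x†)} of terminating vectors is a linear subspace of ℂ^d: it contains 0 and is closed under addition and under multiplication by complex scalars. (Here x x† denotes the rank-one positive semidefinite matrix associated with the column vector x.) -/

import Mathlib

noncomputable section
open Matrix
open scoped ComplexOrder

variable {d m r : ℕ}

/-- One step of process `i`: `T_i(ρ) = E_i(M₁ ρ M₁†) = ∑_j (E_{i,j} M₁) ρ (E_{i,j} M₁)†`. -/
def Tstep (E : Fin m → Fin r → Matrix (Fin d) (Fin d) ℂ)
    (M1 : Matrix (Fin d) (Fin d) ℂ) (i : Fin m)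
    (ρ : Matrix (Fin d) (Fin d) ℂ) : Matrix (Fin d) (Fin d) ℂ :=
  ∑ j, (E i j * M1) * ρ * (E i j * M1)ᴴ

/-- `T_f` for a word `f = s₁⋯s_n`: apply `T_{s₁}` first, then `T_{s₂}`, …, `T_{s_n}`. -/
def Tword (E : Fin m → Fin r → Matrix (Fin d) (Fin d) ℂ)
    (M1 : Matrix (Fin d) (Fin d) ℂ) (f : List (Fin m))
    (ρ : Matrix (Fin d) (Fin d) ℂ) : Matrix (Fin d) (Fin d) ℂ :=
  f.foldl (fun σ k => Tstep E M1 k σ) ρ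

/-- The support of a matrix: its column space, as a subspace of `ℂ^d`. -/
def supp (A : Matrix (Fin d) (Fin d) ℂ) : Submodule ℂ (Fin d → ℂ) :=
  LinearMap.range (Matrix.toLin' A)

/-- Length-`n` prefix of a schedule. -/
def prefixn (s : ℕ → Fin m) (n : ℕ) : List (Fin m) :=
  List.ofFn (fun i : Fin n => s i)

/-- Termination probability within a word `f`. -/
def tWord (E : Fin m → Fin r → Matrix (Fin d) (Fin d) ℂ)
    (M0 M1 : Matrix (Fin d) (Fin d) ℂ) (f : List (Fin m))
    (ρ : Matrix (Fin d) (Fin d) ℂ) : ℝ :=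
  ∑ n ∈ Finset.range (f.length + 1),
    (M0 * Tword E M1 (f.take n) ρ * M0ᴴ).trace.re

/-- Termination probability along a schedule `s`. -/
def tSched (E : Fin m → Fin r → Matrix (Fin d) (Fin d) ℂ)
    (M0 M1 : Matrix (Fin d) (Fin d) ℂ) (s : ℕ → Fin m)
    (ρ : Matrix (Fin d) (Fin d) ℂ) : ℝ :=
  ∑' n : ℕ, (M0 * Tword E M1 (prefixn s n) ρ * M0ᴴ).trace.re

/-- Termination probability `t(ρ)`: infimum over all schedules. -/
def tInf (E : Fin m → Fin r → Matrix (Fin d) (Fin d) ℂ)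
    (M0 M1 : Matrix (Fin d) (Fin d) ℂ)
    (ρ : Matrix (Fin d) (Fin d) ℂ) : ℝ :=
  ⨅ s : ℕ → Fin m, tSched E M0 M1 s ρ

/-- The reachable space `H_{R(ρ)}`. -/
def HR (E : Fin m → Fin r → Matrix (Fin d) (Fin d) ℂ)
    (M1 : Matrix (Fin d) (Fin d) ℂ)
    (ρ : Matrix (Fin d) (Fin d) ℂ) : Submodule ℂ (Fin d → ℂ) :=
  ⨆ f : List (Fin m), supp (Tword E M1 f ρ)

/-- The average super-operator `T = (1/m) ∑ T_i`. -/
def Tavg (E : Fin m → Fin r → Matrix (Fin d) (Fin d) ℂ)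
    (M1 : Matrix (Fin d) (Fin d) ℂ)
    (ρ : Matrix (Fin d) (Fin d) ℂ) : Matrix (Fin d) (Fin d) ℂ :=
  ((m : ℂ)⁻¹) • ∑ i : Fin m, Tstep E M1 i ρ

/-- `H_{R̄_n(ρ)} = ⋁_{k=0}^n supp(T^k(ρ))`. -/
def HRbar (E : Fin m → Fin r → Matrix (Fin d) (Fin d) ℂ)
    (M1 : Matrix (Fin d) (Fin d) ℂ)
    (ρ : Matrix (Fin d) (Fin d) ℂ) (n : ℕ) : Submodule ℂ (Fin d → ℂ) :=
  ⨆ k : Fin (n + 1), supp ((Tavg E M1)^[k] ρ)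

/-- Reachable termination probability `h(ρ)`. -/
def hProb (E : Fin m → Fin r → Matrix (Fin d) (Fin d) ℂ)
    (M0 M1 : Matrix (Fin d) (Fin d) ℂ)
    (ρ : Matrix (Fin d) (Fin d) ℂ) : ℝ :=
  sInf { x : ℝ | ∃ σ : Matrix (Fin d) (Fin d) ℂ,
    σ.PosSemidef ∧ σ.trace = 1 ∧ supp σ ≤ HR E M1 ρ ∧ x = tInf E M0 M1 σ }

/-- `PD_f`: pure states diverging within the word `f`. -/
def PDword (E : Fin m → Fin r → Matrix (Fin d) (Fin d) ℂ)
    (M0 M1 : Matrix (Fin d) (Fin d) ℂ) (f : List (Fin m)) : Set (Fin d → ℂ) :=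
  { x : Fin d → ℂ | tWord E M0 M1 f (Matrix.vecMulVec x (star x)) = 0 }

/-- `PD_n`: union of `PD_f` over words of length `n`. -/
def PDn (E : Fin m → Fin r → Matrix (Fin d) (Fin d) ℂ)
    (M0 M1 : Matrix (Fin d) (Fin d) ℂ) (n : ℕ) : Set (Fin d → ℂ) :=
  { x : Fin d → ℂ | ∃ f : List (Fin m), f.length = n ∧ x ∈ PDword E M0 M1 f }

/-- `PD`: the diverging pure states. -/
def PD (E : Fin m → Fin r → Matrix (Fin d) (Fin d) ℂ)
    (M0 M1 : Matrix (Fin d) (Fin d) ℂ) : Set (Fin d → ℂ) :=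
  { x : Fin d → ℂ | ∃ s : ℕ → Fin m, tSched E M0 M1 s (Matrix.vecMulVec x (star x)) = 0 }

open Filter Topology

/-! Each step splits the trace of the state into the mass measured by `M₀` and the mass passed on,
so the partial sums of `t_s(ρ)` telescope to `tr ρ - tr T_{s(≤N)}(ρ)`. Hence `t(ρ) = tr ρ` exactly
when the surviving mass `tr T_{s(≤N)}(ρ)` tends to `0` along every schedule `s`. The surviving mass
is linear in `ρ` and nonnegative on positive semidefinite matrices, so the parallelogram identity
`(x+y)(x+y)† + (x-y)(x-y)† = 2xx† + 2yy†` squeezes it to `0` for `x + y`, and `(cx)(cx)† = |c|² xx†`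
handles scalars. -/

section Linearity

variable (E : Fin m → Fin r → Matrix (Fin d) (Fin d) ℂ) (M1 : Matrix (Fin d) (Fin d) ℂ)

lemma Tword_cons (i : Fin m) (f : List (Fin m)) (ρ : Matrix (Fin d) (Fin d) ℂ) :
    Tword E M1 (i :: f) ρ = Tword E M1 f (Tstep E M1 i ρ) := rfl

lemma Tword_prefixn_succ (s : ℕ → Fin m) (N : ℕ) (ρ : Matrix (Fin d) (Fin d) ℂ) :
    Tword E M1 (prefixn s (N + 1)) ρ = Tstep E M1 (s N) (Tword E M1 (prefixn s N) ρ) := by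
  rw [prefixn, List.ofFn_succ', List.concat_eq_append, Tword, List.foldl_append]
  rfl

lemma Tstep_add (i : Fin m) (ρ σ : Matrix (Fin d) (Fin d) ℂ) :
    Tstep E M1 i (ρ + σ) = Tstep E M1 i ρ + Tstep E M1 i σ := by
  simp [Tstep, Matrix.mul_add, Matrix.add_mul, Finset.sum_add_distrib]

lemma Tstep_smul (i : Fin m) (c : ℂ) (ρ : Matrix (Fin d) (Fin d) ℂ) :
    Tstep E M1 i (c • ρ) = c • Tstep E M1 i ρ := by
  simp [Tstep, Finset.smul_sum]

lemma Tword_add (f : List (Fin m)) (ρ σ : Matrix (Fin d) (Fin d) ℂ) :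
    Tword E M1 f (ρ + σ) = Tword E M1 f ρ + Tword E M1 f σ := by
  induction f generalizing ρ σ with
  | nil => rfl
  | cons i f ih => simp only [Tword_cons, Tstep_add, ih]

lemma Tword_smul (f : List (Fin m)) (c : ℂ) (ρ : Matrix (Fin d) (Fin d) ℂ) :
    Tword E M1 f (c • ρ) = c • Tword E M1 f ρ := by
  induction f generalizing ρ with
  | nil => rfl
  | cons i f ih => simp only [Tword_cons, Tstep_smul, ih]

lemma Tword_zero (f : List (Fin m)) : Tword E M1 f 0 = 0 := by
  simpa using Tword_smul E M1 f 0 0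

lemma Tstep_posSemidef (i : Fin m) {ρ : Matrix (Fin d) (Fin d) ℂ} (hρ : ρ.PosSemidef) :
    (Tstep E M1 i ρ).PosSemidef :=
  Finset.sum_induction _ Matrix.PosSemidef (fun _ _ ha hb => ha.add hb) .zero
    fun _ _ => hρ.mul_mul_conjTranspose_same _

lemma Tword_posSemidef (f : List (Fin m)) {ρ : Matrix (Fin d) (Fin d) ℂ} (hρ : ρ.PosSemidef) :
    (Tword E M1 f ρ).PosSemidef := by
  induction f generalizing ρ with
  | nil => exact hρ
  | cons i f ih => exact ih (Tstep_posSemidef E M1 i hρ)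

end Linearity

section TracePreservation

variable {E : Fin m → Fin r → Matrix (Fin d) (Fin d) ℂ} {M0 M1 : Matrix (Fin d) (Fin d) ℂ}

lemma trace_mul_mul_conjTranspose {n R : Type*} [Fintype n] [CommSemiring R] [StarRing R]
    (B ρ : Matrix n n R) :
    (B * ρ * Bᴴ).trace = (Bᴴ * B * ρ).trace := by
  rw [Matrix.trace_mul_comm, ← Matrix.mul_assoc]

lemma trace_Tstep (hE : ∀ i, ∑ j, (E i j)ᴴ * E i j = 1) (i : Fin m)
    (ρ : Matrix (Fin d) (Fin d) ℂ) :
    (Tstep E M1 i ρ).trace = (M1 * ρ * M1ᴴ).trace := by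
  calc (Tstep E M1 i ρ).trace
      = ∑ j, (M1ᴴ * ((E i j)ᴴ * E i j) * M1 * ρ).trace := by
        rw [Tstep, Matrix.trace_sum]
        refine Finset.sum_congr rfl fun j _ => ?_
        rw [trace_mul_mul_conjTranspose, Matrix.conjTranspose_mul]
        simp only [Matrix.mul_assoc]
    _ = (M1ᴴ * (∑ j, (E i j)ᴴ * E i j) * M1 * ρ).trace := by
        simp only [← Matrix.trace_sum, Finset.mul_sum, Finset.sum_mul]
    _ = (M1 * ρ * M1ᴴ).trace := by
        rw [hE i, Matrix.mul_one, trace_mul_mul_conjTranspose]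

lemma trace_measure_add_trace_Tstep (hE : ∀ i, ∑ j, (E i j)ᴴ * E i j = 1)
    (hM : M0ᴴ * M0 + M1ᴴ * M1 = 1) (i : Fin m) (ρ : Matrix (Fin d) (Fin d) ℂ) :
    (M0 * ρ * M0ᴴ).trace + (Tstep E M1 i ρ).trace = ρ.trace := by
  rw [trace_Tstep hE, trace_mul_mul_conjTranspose, trace_mul_mul_conjTranspose,
    ← Matrix.trace_add, ← Matrix.add_mul, hM, Matrix.one_mul]

lemma sum_range_trace_measure_Tword (hE : ∀ i, ∑ j, (E i j)ᴴ * E i j = 1)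
    (hM : M0ᴴ * M0 + M1ᴴ * M1 = 1) (s : ℕ → Fin m) (ρ : Matrix (Fin d) (Fin d) ℂ) (N : ℕ) :
    ∑ n ∈ Finset.range N, (M0 * Tword E M1 (prefixn s n) ρ * M0ᴴ).trace
      = ρ.trace - (Tword E M1 (prefixn s N) ρ).trace := by
  induction N with
  | zero => simp [prefixn, Tword]
  | succ N ih =>
    rw [Finset.sum_range_succ, ih, Tword_prefixn_succ,
      ← trace_measure_add_trace_Tstep hE hM (s N) (Tword E M1 (prefixn s N) ρ)]
    ring

end TracePreservation

/-- The probability that the program started in `ρ` is still running after `N` steps of `s`. -/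
def survivingMass (E : Fin m → Fin r → Matrix (Fin d) (Fin d) ℂ) (M1 : Matrix (Fin d) (Fin d) ℂ)
    (s : ℕ → Fin m) (ρ : Matrix (Fin d) (Fin d) ℂ) (N : ℕ) : ℝ :=
  (Tword E M1 (prefixn s N) ρ).trace.re

section SurvivingMass

variable {E : Fin m → Fin r → Matrix (Fin d) (Fin d) ℂ} {M0 M1 : Matrix (Fin d) (Fin d) ℂ}

lemma survivingMass_add (s : ℕ → Fin m) (ρ σ : Matrix (Fin d) (Fin d) ℂ) (N : ℕ) :
    survivingMass E M1 s (ρ + σ) N = survivingMass E M1 s ρ N + survivingMass E M1 s σ N := by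
  simp [survivingMass, Tword_add]

lemma survivingMass_ofReal_smul (s : ℕ → Fin m) (k : ℝ) (ρ : Matrix (Fin d) (Fin d) ℂ) (N : ℕ) :
    survivingMass E M1 s ((k : ℂ) • ρ) N = k * survivingMass E M1 s ρ N := by
  rw [survivingMass, Tword_smul, Matrix.trace_smul, smul_eq_mul, Complex.re_ofReal_mul,
    survivingMass]

lemma survivingMass_zero (s : ℕ → Fin m) (N : ℕ) : survivingMass E M1 s 0 N = 0 := by
  simp [survivingMass, Tword_zero]

lemma survivingMass_nonneg (s : ℕ → Fin m) {ρ : Matrix (Fin d) (Fin d) ℂ} (hρ : ρ.PosSemidef)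
    (N : ℕ) : 0 ≤ survivingMass E M1 s ρ N :=
  (Complex.nonneg_iff.mp (Tword_posSemidef E M1 _ hρ).trace_nonneg).1

lemma tSched_term_nonneg (s : ℕ → Fin m) {ρ : Matrix (Fin d) (Fin d) ℂ} (hρ : ρ.PosSemidef)
    (n : ℕ) : 0 ≤ (M0 * Tword E M1 (prefixn s n) ρ * M0ᴴ).trace.re :=
  (Complex.nonneg_iff.mp
    ((Tword_posSemidef E M1 _ hρ).mul_mul_conjTranspose_same M0).trace_nonneg).1

lemma sum_range_tSched_term (hE : ∀ i, ∑ j, (E i j)ᴴ * E i j = 1)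
    (hM : M0ᴴ * M0 + M1ᴴ * M1 = 1) (s : ℕ → Fin m) (ρ : Matrix (Fin d) (Fin d) ℂ) (N : ℕ) :
    ∑ n ∈ Finset.range N, (M0 * Tword E M1 (prefixn s n) ρ * M0ᴴ).trace.re
      = ρ.trace.re - survivingMass E M1 s ρ N := by
  rw [← Complex.re_sum, sum_range_trace_measure_Tword hE hM, Complex.sub_re, survivingMass]

lemma tSched_eq_trace_iff (hE : ∀ i, ∑ j, (E i j)ᴴ * E i j = 1)
    (hM : M0ᴴ * M0 + M1ᴴ * M1 = 1) (s : ℕ → Fin m) {ρ : Matrix (Fin d) (Fin d) ℂ}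
    (hρ : ρ.PosSemidef) :
    tSched E M0 M1 s ρ = ρ.trace.re ↔
      Tendsto (survivingMass E M1 s ρ) atTop (𝓝 0) := by
  have hsummable : Summable fun n => (M0 * Tword E M1 (prefixn s n) ρ * M0ᴴ).trace.re :=
    summable_of_sum_range_le (c := ρ.trace.re) (tSched_term_nonneg s hρ) fun N => by
      rw [sum_range_tSched_term hE hM]
      linarith [survivingMass_nonneg (E := E) (M1 := M1) s hρ N]
  rw [tSched, ← hsummable.hasSum_iff, hasSum_iff_tendsto_nat_of_nonneg
    (tSched_term_nonneg s hρ), funext (sum_range_tSched_term hE hM s ρ)]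
  simpa using tendsto_const_sub_iff (ρ.trace.re) (c := 0) (f := survivingMass E M1 s ρ)

lemma tSched_le_trace (hE : ∀ i, ∑ j, (E i j)ᴴ * E i j = 1)
    (hM : M0ᴴ * M0 + M1ᴴ * M1 = 1) (s : ℕ → Fin m) {ρ : Matrix (Fin d) (Fin d) ℂ}
    (hρ : ρ.PosSemidef) : tSched E M0 M1 s ρ ≤ ρ.trace.re :=
  Real.tsum_le_of_sum_range_le (tSched_term_nonneg s hρ) fun N => by
    rw [sum_range_tSched_term hE hM]
    linarith [survivingMass_nonneg (E := E) (M1 := M1) s hρ N]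

lemma tInf_eq_trace_iff [Nonempty (Fin m)] (hE : ∀ i, ∑ j, (E i j)ᴴ * E i j = 1)
    (hM : M0ᴴ * M0 + M1ᴴ * M1 = 1) {ρ : Matrix (Fin d) (Fin d) ℂ} (hρ : ρ.PosSemidef) :
    tInf E M0 M1 ρ = ρ.trace.re ↔ ∀ s, Tendsto (survivingMass E M1 s ρ) atTop (𝓝 0) := by
  simp only [← tSched_eq_trace_iff hE hM _ hρ]
  refine ⟨fun h s => le_antisymm (tSched_le_trace hE hM s hρ) ?_, fun h => ?_⟩
  · have hbdd : BddBelow (Set.range fun s => tSched E M0 M1 s ρ) :=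
      ⟨0, Set.forall_mem_range.mpr fun s => tsum_nonneg (tSched_term_nonneg s hρ)⟩
    exact h ▸ ciInf_le hbdd s
  · simp only [tInf, h, ciInf_const]

end SurvivingMass

lemma vecMulVec_add_add_vecMulVec_sub {n α : Type*} [CommRing α] [StarRing α] (x y : n → α) :
    vecMulVec (x + y) (star (x + y)) + vecMulVec (x - y) (star (x - y))
      = 2 • (vecMulVec x (star x) + vecMulVec y (star y)) := by
  ext i j
  simp only [Matrix.add_apply, Matrix.smul_apply, vecMulVec_apply, Pi.add_apply, Pi.sub_apply,
    Pi.star_apply, star_add, star_sub, nsmul_eq_mul]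
  ring

lemma vecMulVec_smul_star_smul {n : Type*} (c : ℂ) (x : n → ℂ) :
    vecMulVec (c • x) (star (c • x)) = (Complex.normSq c : ℂ) • vecMulVec x (star x) := by
  rw [star_smul, smul_vecMulVec, vecMulVec_smul, smul_smul, ← Complex.mul_conj]
  rfl

def vanishingMassSubspace (E : Fin m → Fin r → Matrix (Fin d) (Fin d) ℂ)
    (M1 : Matrix (Fin d) (Fin d) ℂ) : Submodule ℂ (Fin d → ℂ) where
  carrier := {x | ∀ s, Tendsto (survivingMass E M1 s (vecMulVec x (star x))) atTop (𝓝 0)}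
  zero_mem' s := by
    rw [zero_vecMulVec, funext (survivingMass_zero s)]
    exact tendsto_const_nhds
  add_mem' {x y} hx hy s := by
    have hparallelogram (N : ℕ) :
        survivingMass E M1 s (vecMulVec (x + y) (star (x + y))) N
          + survivingMass E M1 s (vecMulVec (x - y) (star (x - y))) N
          = 2 * (survivingMass E M1 s (vecMulVec x (star x)) N
            + survivingMass E M1 s (vecMulVec y (star y)) N) := by
      rw [← survivingMass_add, vecMulVec_add_add_vecMulVec_sub, two_nsmul, survivingMass_add,
        survivingMass_add]
      ring
    have hbound := ((hx s).add (hy s)).const_mul 2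
    rw [add_zero, mul_zero] at hbound
    refine tendsto_of_tendsto_of_tendsto_of_le_of_le tendsto_const_nhds hbound
      (survivingMass_nonneg s (posSemidef_vecMulVec_self_star _)) fun N => ?_
    have hdiff := survivingMass_nonneg (E := E) (M1 := M1) s
      (posSemidef_vecMulVec_self_star (x - y)) N
    linarith [hparallelogram N]
  smul_mem' c x hx s := by
    rw [vecMulVec_smul_star_smul, funext (survivingMass_ofReal_smul s _ _)]
    simpa using (hx s).const_mul (Complex.normSq c)

theorem terminating_vectors_subspace_general (d m r : ℕ) (hm : 0 < m)
    (E : Fin m → Fin r → Matrix (Fin d) (Fin d) ℂ)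
    (hE : ∀ i, ∑ j, (E i j)ᴴ * E i j = 1)
    (M0 M1 : Matrix (Fin d) (Fin d) ℂ)
    (hM : M0ᴴ * M0 + M1ᴴ * M1 = 1) :
    (0 : Fin d → ℂ) ∈
        { x : Fin d → ℂ | tInf E M0 M1 (Matrix.vecMulVec x (star x)) =
            (Matrix.vecMulVec x (star x)).trace.re } ∧
    (∀ x ∈ { x : Fin d → ℂ | tInf E M0 M1 (Matrix.vecMulVec x (star x)) =
            (Matrix.vecMulVec x (star x)).trace.re },
      ∀ y ∈ { x : Fin d → ℂ | tInf E M0 M1 (Matrix.vecMulVec x (star x)) =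
            (Matrix.vecMulVec x (star x)).trace.re },
        x + y ∈ { x : Fin d → ℂ | tInf E M0 M1 (Matrix.vecMulVec x (star x)) =
            (Matrix.vecMulVec x (star x)).trace.re }) ∧
    (∀ (c : ℂ), ∀ x ∈ { x : Fin d → ℂ | tInf E M0 M1 (Matrix.vecMulVec x (star x)) =
            (Matrix.vecMulVec x (star x)).trace.re },
      c • x ∈ { x : Fin d → ℂ | tInf E M0 M1 (Matrix.vecMulVec x (star x)) =
            (Matrix.vecMulVec x (star x)).trace.re }) := by
  have : Nonempty (Fin m) := ⟨⟨0, hm⟩⟩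
  have hterminating (x : Fin d → ℂ) :
      tInf E M0 M1 (vecMulVec x (star x)) = (vecMulVec x (star x)).trace.re ↔
        x ∈ vanishingMassSubspace E M1 :=
    tInf_eq_trace_iff hE hM (posSemidef_vecMulVec_self_star x)
  simp only [Set.mem_ofPred_eq, hterminating]
  exact ⟨zero_mem _, fun x hx y hy => add_mem hx hy, fun c x hx => Submodule.smul_mem _ c hx⟩

/-- the set of terminating vectors is a linear subspace of `ℂ^d`. -/
theorem terminating_vectors_subspace (d m r : ℕ) (hd : 0 < d) (hm : 0 < m)
    (E : Fin m → Fin r → Matrix (Fin d) (Fin d) ℂ)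
    (hE : ∀ i, ∑ j, (E i j)ᴴ * E i j = 1)
    (M0 M1 : Matrix (Fin d) (Fin d) ℂ)
    (hM : M0ᴴ * M0 + M1ᴴ * M1 = 1) :
    (0 : Fin d → ℂ) ∈
        { x : Fin d → ℂ | tInf E M0 M1 (Matrix.vecMulVec x (star x)) =
            (Matrix.vecMulVec x (star x)).trace.re } ∧
    (∀ x ∈ { x : Fin d → ℂ | tInf E M0 M1 (Matrix.vecMulVec x (star x)) =
            (Matrix.vecMulVec x (star x)).trace.re },
      ∀ y ∈ { x : Fin d → ℂ | tInf E M0 M1 (Matrix.vecMulVec x (star x)) =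
            (Matrix.vecMulVec x (star x)).trace.re },
        x + y ∈ { x : Fin d → ℂ | tInf E M0 M1 (Matrix.vecMulVec x (star x)) =
            (Matrix.vecMulVec x (star x)).trace.re }) ∧
    (∀ (c : ℂ), ∀ x ∈ { x : Fin d → ℂ | tInf E M0 M1 (Matrix.vecMulVec x (star x)) =
            (Matrix.vecMulVec x (star x)).trace.re },
      c • x ∈ { x : Fin d → ℂ | tInf E M0 M1 (Matrix.vecMulVec x (star x)) =
            (Matrix.vecMulVec x (star x)).trace.re }) :=
  terminating_vectors_subspace_general d m r hm E hE M0 M1 hM
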